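/- arXiv:2305.05248 — 3 statements merged into one kernel-verified Lean document; each statement's English description precedes it below -/
import Mathlib

section
/- Contraction inequality for the fractional Rademacher average of a Lipschitz loss class: let T be a nonempty index set, m ∈ ℕ, and {(I_j, ω_j)}_{j∈[J]} a finite family with I_j ⊆ [m] and ω_j > 0. Let v : [m] × T → ℝ and for each i ∈ [m] let φ_i : ℝ → ℝ be μ-Lipschitz. Assume that for every sign vector σ ∈ {−1,1}^m and every j, the sets { ∑_{i∈I_j} σ_i φ_i(v_i(t)) : t ∈ T } and { ∑_{i∈I_j} σ_i v_i(t) : t ∈ T } are bounded above. Then 2^{−m} ∑_{σ∈{−1,1}^m} ∑_{j∈[J]} ω_j · sup_{t∈T} ∑_{i∈I_j} σ_i φ_i(v_i(t)) ≤ μ · 2^{−m} ∑_{σ∈{−1,1}^m} ∑_{j∈[J]} ω_j · sup_{t∈T} ∑_{i∈I_j} σ_i v_i(t). -/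
open scoped BigOperators


open scoped BigOperators

private lemma key_step {T : Type*} [Nonempty T] (A f g : T → ℝ)
    (hfg : ∀ t s, |f t - f s| ≤ |g t - g s|)
    (h1 : BddAbove (Set.range fun t => A t + g t))
    (h2 : BddAbove (Set.range fun t => A t - g t)) :
    (⨆ t, (A t + f t)) + (⨆ t, (A t - f t)) ≤
      (⨆ t, (A t + g t)) + (⨆ t, (A t - g t)) := by
  set R := (⨆ t, (A t + g t)) + (⨆ t, (A t - g t)) with hR
  have key : ∀ t s, (A t + f t) + (A s - f s) ≤ R := by
    intro t s
    rcases le_total (g s) (g t) with h | h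
    · have h1' : A t + g t ≤ ⨆ t, (A t + g t) := le_ciSup h1 t
      have h2' : A s - g s ≤ ⨆ t, (A t - g t) := le_ciSup h2 s
      have hd : f t - f s ≤ g t - g s := by
        calc f t - f s ≤ |f t - f s| := le_abs_self _
        _ ≤ |g t - g s| := hfg t s
        _ = g t - g s := abs_of_nonneg (by linarith)
      simp only [hR]; linarith
    · have h1' : A s + g s ≤ ⨆ t, (A t + g t) := le_ciSup h1 s
      have h2' : A t - g t ≤ ⨆ t, (A t - g t) := le_ciSup h2 t
      have hd : f t - f s ≤ g s - g t := by
        calc f t - f s ≤ |f t - f s| := le_abs_self _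
        _ ≤ |g t - g s| := hfg t s
        _ = g s - g t := by rw [abs_sub_comm]; exact abs_of_nonneg (by linarith)
      simp only [hR]; linarith
  have h4 : ∀ t, (⨆ s, (A s - f s)) ≤ R - (A t + f t) :=
    fun t => ciSup_le fun s => by linarith [key t s]
  have h5 : (⨆ t, (A t + f t)) ≤ R - (⨆ s, (A s - f s)) :=
    ciSup_le fun t => by linarith [h4 t]
  linarith

private lemma main_step {T : Type*} [Nonempty T] {m : ℕ} (S : Finset (Fin m))
    (f g : Fin m → T → ℝ)
    (hfg : ∀ i ∈ S, ∀ t s, |f i t - f i s| ≤ |g i t - g i s|)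
    (hbdd : ∀ (σ : Fin m → Bool) (V : Finset (Fin m)), V ⊆ S →
      BddAbove (Set.range fun t => ∑ i ∈ S \ V, (if σ i then (1:ℝ) else -1) * g i t
        + ∑ i ∈ V, (if σ i then (1:ℝ) else -1) * f i t)) :
    ∑ σ : Fin m → Bool, (⨆ t, ∑ i ∈ S, (if σ i then (1:ℝ) else -1) * f i t) ≤
    ∑ σ : Fin m → Bool, (⨆ t, ∑ i ∈ S, (if σ i then (1:ℝ) else -1) * g i t) := by
  have claim : ∀ V : Finset (Fin m), V ⊆ S →
      ∑ σ : Fin m → Bool, (⨆ t, ∑ i ∈ S \ V, (if σ i then (1:ℝ) else -1) * g i t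
        + ∑ i ∈ V, (if σ i then (1:ℝ) else -1) * f i t) ≤
      ∑ σ : Fin m → Bool, (⨆ t, ∑ i ∈ S, (if σ i then (1:ℝ) else -1) * g i t) := by
    intro V
    induction V using Finset.induction_on with
    | empty =>
      intro _
      simp only [Finset.sdiff_empty, Finset.sum_empty, add_zero]
      exact le_rfl
    | @insert k V hkV ih =>
      intro hsub
      have hkS : k ∈ S := hsub (Finset.mem_insert_self k V)
      have hVS : V ⊆ S := (Finset.subset_insert k V).trans hsub
      refine le_trans ?_ (ih hVS)
      -- flip involution
      set flip : (Fin m → Bool) → (Fin m → Bool) :=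
        fun σ => Function.update σ k (!σ k) with hflipdef
      have hinv : Function.Involutive flip := by
        intro σ; funext i
        rcases eq_or_ne i k with rfl | hik
        · simp [hflipdef, Function.update_self]
        · simp [hflipdef, Function.update_of_ne hik]
      have hflipne : ∀ σ i, i ≠ k → flip σ i = σ i := by
        intro σ i hik; simp [hflipdef, Function.update_of_ne hik]
      have hflipk : ∀ σ, flip σ k = !σ k := by
        intro σ; simp [hflipdef]
      have hsumflip : ∀ h : (Fin m → Bool) → ℝ,
          ∑ σ : Fin m → Bool, h (flip σ) = ∑ σ : Fin m → Bool, h σ :=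
        fun h => Fintype.sum_equiv (hinv.toPerm flip) _ _ (fun σ => rfl)
      -- pointwise pair inequality
      set Φ : (Fin m → Bool) → ℝ := fun σ =>
        ⨆ t, ∑ i ∈ S \ insert k V, (if σ i then (1:ℝ) else -1) * g i t
          + ∑ i ∈ insert k V, (if σ i then (1:ℝ) else -1) * f i t with hΦ
      set Ψ : (Fin m → Bool) → ℝ := fun σ =>
        ⨆ t, ∑ i ∈ S \ V, (if σ i then (1:ℝ) else -1) * g i t
          + ∑ i ∈ V, (if σ i then (1:ℝ) else -1) * f i t with hΨ
      have pair : ∀ σ, Φ σ + Φ (flip σ) ≤ Ψ σ + Ψ (flip σ) := by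
        intro σ
        set c : ℝ := if σ k then (1:ℝ) else -1 with hc
        set A : T → ℝ := fun t =>
          ∑ i ∈ S \ insert k V, (if σ i then (1:ℝ) else -1) * g i t
            + ∑ i ∈ V, (if σ i then (1:ℝ) else -1) * f i t with hA
        have hknotin : k ∉ S \ insert k V := by
          simp [Finset.mem_sdiff]
        have hsplitSV : ∀ (τ : Fin m → Bool) (t : T),
            ∑ i ∈ S \ V, (if τ i then (1:ℝ) else -1) * g i t
            = (if τ k then (1:ℝ) else -1) * g k t
              + ∑ i ∈ S \ insert k V, (if τ i then (1:ℝ) else -1) * g i t := by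
          intro τ t
          have hk' : k ∈ S \ V := Finset.mem_sdiff.mpr ⟨hkS, hkV⟩
          rw [← Finset.add_sum_erase _ _ hk', Finset.sdiff_insert]
        -- rewrite the four sups
        have hgsame : ∀ t, ∑ i ∈ S \ insert k V, (if flip σ i then (1:ℝ) else -1) * g i t
            = ∑ i ∈ S \ insert k V, (if σ i then (1:ℝ) else -1) * g i t := by
          intro t; apply Finset.sum_congr rfl; intro i hi
          have : i ≠ k := by intro h; exact hknotin (h ▸ hi)
          rw [hflipne σ i this]
        have hfsame : ∀ t, ∑ i ∈ V, (if flip σ i then (1:ℝ) else -1) * f i t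
            = ∑ i ∈ V, (if σ i then (1:ℝ) else -1) * f i t := by
          intro t; apply Finset.sum_congr rfl; intro i hi
          have : i ≠ k := by rintro rfl; exact hkV hi
          rw [hflipne σ i this]
        have hcflip : (if flip σ k then (1:ℝ) else -1) = -c := by
          rw [hflipk]; cases h : σ k <;> simp [hc, h]
        have e1 : Φ σ = ⨆ t, A t + c * f k t := by
          refine iSup_congr fun t => ?_
          simp only [hA, hc]; rw [Finset.sum_insert hkV]; ring
        have e2 : Φ (flip σ) = ⨆ t, A t - c * f k t := by
          refine iSup_congr fun t => ?_
          simp only [hA, hc]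
          rw [Finset.sum_insert hkV, hgsame, hfsame, hcflip]; simp only [hc]; ring
        have e3 : Ψ σ = ⨆ t, A t + c * g k t := by
          refine iSup_congr fun t => ?_
          simp only [hA, hc]; rw [hsplitSV σ t]; ring
        have e4 : Ψ (flip σ) = ⨆ t, A t - c * g k t := by
          refine iSup_congr fun t => ?_
          simp only [hA, hc]
          rw [hsplitSV (flip σ) t, hgsame, hfsame, hcflip]; simp only [hc]; ring
        rw [e1, e2, e3, e4]
        apply key_step A (fun t => c * f k t) (fun t => c * g k t)
        · intro t s
          have habs : |c| = 1 := by cases h : σ k <;> simp [hc, h]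
          rw [← mul_sub, ← mul_sub, abs_mul, abs_mul, habs, one_mul, one_mul]
          exact hfg k hkS t s
        · have hre : (fun t => A t + c * g k t)
              = fun t => ∑ i ∈ S \ V, (if σ i then (1:ℝ) else -1) * g i t
                + ∑ i ∈ V, (if σ i then (1:ℝ) else -1) * f i t := by
            funext t; simp only [hA, hc]; rw [hsplitSV σ t]; ring
          rw [hre]; exact hbdd σ V hVS
        · have hre : (fun t => A t - c * g k t)
              = fun t => ∑ i ∈ S \ V, (if flip σ i then (1:ℝ) else -1) * g i t
                + ∑ i ∈ V, (if flip σ i then (1:ℝ) else -1) * f i t := by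
            funext t; simp only [hA, hc]
            rw [hsplitSV (flip σ) t, hgsame, hfsame, hcflip]; simp only [hc]; ring
          rw [hre]; exact hbdd (flip σ) V hVS
      -- sum the pair inequality
      have h2 : (2:ℝ) * ∑ σ : Fin m → Bool, Φ σ ≤ (2:ℝ) * ∑ σ : Fin m → Bool, Ψ σ := by
        have lhs2 : (2:ℝ) * ∑ σ : Fin m → Bool, Φ σ
            = ∑ σ : Fin m → Bool, (Φ σ + Φ (flip σ)) := by
          rw [Finset.sum_add_distrib, hsumflip Φ]; ring
        have rhs2 : (2:ℝ) * ∑ σ : Fin m → Bool, Ψ σ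
            = ∑ σ : Fin m → Bool, (Ψ σ + Ψ (flip σ)) := by
          rw [Finset.sum_add_distrib, hsumflip Ψ]; ring
        rw [lhs2, rhs2]
        exact Finset.sum_le_sum fun σ _ => pair σ
      linarith
  have := claim S le_rfl
  simpa using this

private lemma bdd_subsum {T : Type*} {m : ℕ} (S U : Finset (Fin m)) (hU : U ⊆ S)
    (u : Fin m → T → ℝ)
    (hb : ∀ σ : Fin m → Bool,
      BddAbove (Set.range fun t => ∑ i ∈ S, (if σ i then (1:ℝ) else -1) * u i t))
    (σ : Fin m → Bool) :
    BddAbove (Set.range fun t => ∑ i ∈ U, (if σ i then (1:ℝ) else -1) * u i t) := by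
  set σ' : Fin m → Bool := fun i => if i ∈ U then σ i else !σ i with hσ'
  obtain ⟨b, hbb⟩ := hb σ
  obtain ⟨b', hbb'⟩ := hb σ'
  refine ⟨(b + b') / 2, ?_⟩
  rintro x ⟨t, rfl⟩
  have h1 : ∑ i ∈ S, (if σ i then (1:ℝ) else -1) * u i t ≤ b := hbb ⟨t, rfl⟩
  have h2 : ∑ i ∈ S, (if σ' i then (1:ℝ) else -1) * u i t ≤ b' := hbb' ⟨t, rfl⟩
  have key : ∑ i ∈ S, (if σ i then (1:ℝ) else -1) * u i t
      + ∑ i ∈ S, (if σ' i then (1:ℝ) else -1) * u i t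
      = 2 * ∑ i ∈ U, (if σ i then (1:ℝ) else -1) * u i t := by
    calc ∑ i ∈ S, (if σ i then (1:ℝ) else -1) * u i t
          + ∑ i ∈ S, (if σ' i then (1:ℝ) else -1) * u i t
        = ∑ i ∈ S, ((if σ i then (1:ℝ) else -1) * u i t
            + (if σ' i then (1:ℝ) else -1) * u i t) := Finset.sum_add_distrib.symm
      _ = ∑ i ∈ S \ U, ((if σ i then (1:ℝ) else -1) * u i t
            + (if σ' i then (1:ℝ) else -1) * u i t)
          + ∑ i ∈ U, ((if σ i then (1:ℝ) else -1) * u i t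
            + (if σ' i then (1:ℝ) else -1) * u i t) := (Finset.sum_sdiff hU).symm
      _ = 0 + ∑ i ∈ U, 2 * ((if σ i then (1:ℝ) else -1) * u i t) := by
          congr 1
          · apply Finset.sum_eq_zero
            intro i hi
            have hiU : i ∉ U := (Finset.mem_sdiff.mp hi).2
            have : σ' i = !σ i := by simp [hσ', hiU]
            rw [this]; cases h : σ i <;> simp [h]
          · apply Finset.sum_congr rfl
            intro i hi
            have : σ' i = σ i := by simp [hσ', hi]
            rw [this]; ring
      _ = 2 * ∑ i ∈ U, (if σ i then (1:ℝ) else -1) * u i t := by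
          rw [zero_add, ← Finset.mul_sum]
  linarith

private lemma bdd_scale {T : Type*} {μ : ℝ} (hμ : 0 ≤ μ) (h : T → ℝ)
    (hb : BddAbove (Set.range h)) : BddAbove (Set.range fun t => μ * h t) := by
  obtain ⟨b, hbb⟩ := hb
  refine ⟨μ * b, ?_⟩
  rintro x ⟨t, rfl⟩
  exact mul_le_mul_of_nonneg_left (hbb ⟨t, rfl⟩) hμ

private lemma bdd_add {T : Type*} (h₁ h₂ : T → ℝ)
    (hb₁ : BddAbove (Set.range h₁)) (hb₂ : BddAbove (Set.range h₂)) :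
    BddAbove (Set.range fun t => h₁ t + h₂ t) := by
  obtain ⟨b₁, hbb₁⟩ := hb₁
  obtain ⟨b₂, hbb₂⟩ := hb₂
  refine ⟨b₁ + b₂, ?_⟩
  rintro x ⟨t, rfl⟩
  exact add_le_add (hbb₁ ⟨t, rfl⟩) (hbb₂ ⟨t, rfl⟩)

/-- **Contraction inequality for the fractional Rademacher average of a
Lipschitz loss class** (Lemma `lem:app_contraction_pairwise`), with the
Rademacher expectation realized as a finite average over sign vectors. -/
theorem fractional_rademacher_contraction
    (T : Type*) [Nonempty T] (m : ℕ) (J : ℕ)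
    (I : Fin J → Finset (Fin m)) (w : Fin J → ℝ) (hw : ∀ j, 0 < w j)
    (v : Fin m → T → ℝ) (φ : Fin m → ℝ → ℝ) (μ : ℝ)
    (hφ : ∀ i a b, |φ i a - φ i b| ≤ μ * |a - b|)
    (hbdd₁ : ∀ (σ : Fin m → Bool) (j : Fin J), BddAbove
      (Set.range fun t => ∑ i ∈ I j, (if σ i then (1 : ℝ) else -1) * φ i (v i t)))
    (hbdd₂ : ∀ (σ : Fin m → Bool) (j : Fin J), BddAbove
      (Set.range fun t => ∑ i ∈ I j, (if σ i then (1 : ℝ) else -1) * v i t)) :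
    ((2 : ℝ) ^ m)⁻¹ * ∑ σ : Fin m → Bool, ∑ j : Fin J, w j *
        ⨆ t : T, ∑ i ∈ I j, (if σ i then (1 : ℝ) else -1) * φ i (v i t)
      ≤ μ * (((2 : ℝ) ^ m)⁻¹ * ∑ σ : Fin m → Bool, ∑ j : Fin J, w j *
        ⨆ t : T, ∑ i ∈ I j, (if σ i then (1 : ℝ) else -1) * v i t) := by
  rcases Nat.eq_zero_or_pos m with rfl | hm
  · have hempty : ∀ j, I j = ∅ := fun j => Finset.eq_empty_of_isEmpty _
    simp [hempty, ciSup_const]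
  · have hμ : 0 ≤ μ := by
      have h0 := hφ ⟨0, hm⟩ 0 1
      have h1 : (0:ℝ) ≤ |φ ⟨0, hm⟩ 0 - φ ⟨0, hm⟩ 1| := abs_nonneg _
      have h2 : |(0:ℝ) - 1| = 1 := by norm_num
      rw [h2, mul_one] at h0
      linarith
    -- per-j contraction
    have perj : ∀ j : Fin J,
        ∑ σ : Fin m → Bool, (⨆ t, ∑ i ∈ I j, (if σ i then (1:ℝ) else -1) * φ i (v i t))
        ≤ ∑ σ : Fin m → Bool, μ * ⨆ t, ∑ i ∈ I j, (if σ i then (1:ℝ) else -1) * v i t := by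
      intro j
      have hmain := main_step (T := T) (I j)
        (fun i t => φ i (v i t)) (fun i t => μ * v i t)
        (by
          intro i _ t s
          have := hφ i (v i t) (v i s)
          calc |φ i (v i t) - φ i (v i s)| ≤ μ * |v i t - v i s| := this
            _ = |μ * v i t - μ * v i s| := by
                rw [← mul_sub, abs_mul, abs_of_nonneg hμ]
        )
        (by
          intro σ V hVS
          apply bdd_add
          · have := bdd_subsum (I j) (I j \ V) (Finset.sdiff_subset) v
              (fun σ' => hbdd₂ σ' j) σ
            have hre : (fun t => ∑ i ∈ I j \ V, (if σ i then (1:ℝ) else -1) * (μ * v i t))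
                = fun t => μ * ∑ i ∈ I j \ V, (if σ i then (1:ℝ) else -1) * v i t := by
              funext t; rw [Finset.mul_sum]
              exact Finset.sum_congr rfl fun i _ => by ring
            rw [hre]
            exact bdd_scale hμ _ this
          · exact bdd_subsum (I j) V hVS (fun i t => φ i (v i t))
              (fun σ' => hbdd₁ σ' j) σ)
      refine hmain.trans (le_of_eq ?_)
      refine Finset.sum_congr rfl fun σ _ => ?_
      rw [Real.mul_iSup_of_nonneg hμ]
      refine iSup_congr fun t => ?_
      rw [Finset.mul_sum]
      exact Finset.sum_congr rfl fun i _ => by ring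
    -- assemble
    have key : ∑ σ : Fin m → Bool, ∑ j : Fin J, w j *
          (⨆ t, ∑ i ∈ I j, (if σ i then (1:ℝ) else -1) * φ i (v i t))
        ≤ ∑ σ : Fin m → Bool, ∑ j : Fin J, w j *
          (μ * ⨆ t, ∑ i ∈ I j, (if σ i then (1:ℝ) else -1) * v i t) := by
      have key2 : ∑ j : Fin J, ∑ σ : Fin m → Bool, w j *
            (⨆ t, ∑ i ∈ I j, (if σ i then (1:ℝ) else -1) * φ i (v i t))
          ≤ ∑ j : Fin J, ∑ σ : Fin m → Bool, w j *
            (μ * ⨆ t, ∑ i ∈ I j, (if σ i then (1:ℝ) else -1) * v i t) := by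
        refine Finset.sum_le_sum fun j _ => ?_
        rw [← Finset.mul_sum, ← Finset.mul_sum]
        exact mul_le_mul_of_nonneg_left (perj j) (hw j).le
      calc ∑ σ : Fin m → Bool, ∑ j : Fin J, w j *
            (⨆ t, ∑ i ∈ I j, (if σ i then (1:ℝ) else -1) * φ i (v i t))
          = ∑ j : Fin J, ∑ σ : Fin m → Bool, w j *
            (⨆ t, ∑ i ∈ I j, (if σ i then (1:ℝ) else -1) * φ i (v i t)) := Finset.sum_comm
        _ ≤ ∑ j : Fin J, ∑ σ : Fin m → Bool, w j *
            (μ * ⨆ t, ∑ i ∈ I j, (if σ i then (1:ℝ) else -1) * v i t) := key2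
        _ = ∑ σ : Fin m → Bool, ∑ j : Fin J, w j *
            (μ * ⨆ t, ∑ i ∈ I j, (if σ i then (1:ℝ) else -1) * v i t) := Finset.sum_comm
    have hc : (0:ℝ) ≤ ((2:ℝ) ^ m)⁻¹ := by positivity
    calc ((2:ℝ) ^ m)⁻¹ * ∑ σ : Fin m → Bool, ∑ j : Fin J, w j *
          ⨆ t, ∑ i ∈ I j, (if σ i then (1:ℝ) else -1) * φ i (v i t)
        ≤ ((2:ℝ) ^ m)⁻¹ * ∑ σ : Fin m → Bool, ∑ j : Fin J, w j *
          (μ * ⨆ t, ∑ i ∈ I j, (if σ i then (1:ℝ) else -1) * v i t) :=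
          mul_le_mul_of_nonneg_left key hc
      _ = μ * (((2:ℝ) ^ m)⁻¹ * ∑ σ : Fin m → Bool, ∑ j : Fin J, w j *
          ⨆ t, ∑ i ∈ I j, (if σ i then (1:ℝ) else -1) * v i t) := by
          have halg : ∑ σ : Fin m → Bool, ∑ j : Fin J, w j *
              (μ * ⨆ t, ∑ i ∈ I j, (if σ i then (1:ℝ) else -1) * v i t)
              = μ * ∑ σ : Fin m → Bool, ∑ j : Fin J, w j *
              ⨆ t, ∑ i ∈ I j, (if σ i then (1:ℝ) else -1) * v i t := by
            rw [Finset.mul_sum]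
            refine Finset.sum_congr rfl fun σ _ => ?_
            rw [Finset.mul_sum]
            exact Finset.sum_congr rfl fun j _ => by ring
          rw [halg]; ring
end

section
/- Contraction inequality for the reweighted univariate loss: let T be a nonempty index set, m ∈ ℕ, and {(I_j, ω_j)}_{j∈[J]} a finite family with I_j ⊆ [m] and ω_j > 0. Let v⁺, v⁻ : [m] × T → ℝ, let a⁺, a⁻ ≥ 0 be constants, and let ℓ : ℝ → ℝ be ρ-Lipschitz. Assume that all the suprema below are over sets bounded above. Then 2^{−m} ∑_{σ∈{−1,1}^m} ∑_{j∈[J]} ω_j · sup_{t∈T} ∑_{i∈I_j} σ_i ( a⁺ ℓ(v⁺_i(t)) + a⁻ ℓ(−v⁻_i(t)) ) ≤ 2ρ · 2^{−2m} ∑_{(σ⁺,σ⁻)∈{−1,1}^m×{−1,1}^m} ∑_{j∈[J]} ω_j · sup_{t∈T} ∑_{i∈I_j} ( σ⁺_i a⁺ v⁺_i(t) + σ⁻_i a⁻ v⁻_i(t) ). -/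
/-!
Since the weights are positive, it suffices to treat one cover element `I_j`. The supremum of the
signed loss sum splits into its `a⁺ℓ(v⁺)` and `a⁻ℓ(-v⁻)` parts, and each part is compared with the
linear class by Talagrand's contraction argument: the signs are replaced one coordinate at a time,
pairing every sign vector with the one flipped at that coordinate, which reduces the step to
`sup (R + F) + sup (R - F) ≤ sup (R + G) + sup (R - G)` whenever `|F t - F s| ≤ |G t - G s|`.
Each one-sign sum is then at most the two-sign average, because averaging over the independent
second sign vector cancels its contribution. All suprema involved are finite: choosing the signs
of the summands shows that every `|a⁺v⁺ᵢ|` and `|a⁻v⁻ᵢ|` is bounded.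
-/

open Finset Function

namespace RademacherContraction

def boolSign (b : Bool) : ℝ := if b then 1 else -1

@[simp] lemma boolSign_true : boolSign true = 1 := rfl

@[simp] lemma boolSign_false : boolSign false = -1 := rfl

@[simp] lemma boolSign_not (b : Bool) : boolSign (!b) = -boolSign b := by
  cases b <;> simp

@[simp] lemma abs_boolSign (b : Bool) : |boolSign b| = 1 := by
  cases b <;> simp

lemma boolSign_mul_le_abs (b : Bool) (x : ℝ) : boolSign b * x ≤ |x| :=
  (le_abs_self _).trans_eq (by rw [abs_mul, abs_boolSign, one_mul])

lemma boolSign_decide_mul (x : ℝ) : boolSign (decide (0 ≤ x)) * x = |x| := by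
  rcases le_or_gt 0 x with h | h
  · simp [h, abs_of_nonneg h]
  · simp [not_le.2 h, abs_of_neg h]

section SignVectors

variable {ι : Type*} [DecidableEq ι]

def flipAt (k : ι) (σ : ι → Bool) : ι → Bool := update σ k (!σ k)

@[simp] lemma flipAt_apply_self (k : ι) (σ : ι → Bool) : flipAt k σ k = !σ k := by
  simp [flipAt]

lemma flipAt_apply_of_ne {k i : ι} (h : i ≠ k) (σ : ι → Bool) : flipAt k σ i = σ i :=
  update_of_ne h _ _

lemma flipAt_involutive (k : ι) : Involutive (flipAt k) := fun σ => by
  simp [flipAt]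

variable [Fintype ι]

lemma sum_comp_flipAt {M : Type*} [AddCommMonoid M] (k : ι) (f : (ι → Bool) → M) :
    ∑ σ, f (flipAt k σ) = ∑ σ, f σ :=
  (flipAt_involutive k).bijective.sum_comp f

lemma sum_boolSign_apply (i : ι) : ∑ σ : ι → Bool, boolSign (σ i) = 0 := by
  have h := sum_comp_flipAt i fun σ => boolSign (σ i)
  simp only [flipAt_apply_self, boolSign_not, sum_neg_distrib] at h
  linarith

lemma sum_signedSum_eq_zero {T : Type*} (A : Finset ι) (g : ι → T → ℝ) (t : T) :
    ∑ σ : ι → Bool, ∑ i ∈ A, boolSign (σ i) * g i t = 0 := by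
  rw [sum_comm]
  exact sum_eq_zero fun i _ => by rw [← sum_mul, sum_boolSign_apply, zero_mul]

end SignVectors

section Bounds

variable {T ι : Type*}

lemma bddAbove_abs_of_abs_sub_le [Nonempty T] {f g : T → ℝ} {ρ : ℝ} (hρ : 0 ≤ ρ)
    (hfg : ∀ t s, |f t - f s| ≤ ρ * |g t - g s|) (hg : BddAbove (Set.range fun t => |g t|)) :
    BddAbove (Set.range fun t => |f t|) := by
  obtain ⟨t₀⟩ := ‹Nonempty T›
  obtain ⟨C, hC⟩ := hg
  refine ⟨|f t₀| + ρ * (C + |g t₀|), ?_⟩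
  rintro _ ⟨t, rfl⟩
  have hgt : |g t| ≤ C := hC ⟨t, rfl⟩
  calc |f t| ≤ |f t₀| + |f t - f t₀| := by linarith [abs_sub_abs_le_abs_sub (f t) (f t₀)]
    _ ≤ |f t₀| + ρ * |g t - g t₀| := by gcongr; exact hfg t t₀
    _ ≤ |f t₀| + ρ * (C + |g t₀|) := by gcongr; linarith [abs_sub (g t) (g t₀)]

lemma bddAbove_signedSum {A : Finset ι} {F : ι → T → ℝ}
    (hF : ∀ i ∈ A, BddAbove (Set.range fun t => |F i t|)) (σ : ι → Bool) :
    BddAbove (Set.range fun t => ∑ i ∈ A, boolSign (σ i) * F i t) := by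
  choose! C hC using hF
  refine ⟨∑ i ∈ A, C i, ?_⟩
  rintro _ ⟨t, rfl⟩
  exact sum_le_sum fun i hi => (boolSign_mul_le_abs _ _).trans (hC i hi ⟨t, rfl⟩)

lemma bddAbove_abs_of_bddAbove_signedSum [Fintype ι] {A : Finset ι} {f : ι → T → ℝ}
    (hf : ∀ σ : ι → Bool, BddAbove (Set.range fun t => ∑ i ∈ A, boolSign (σ i) * f i t)) :
    ∀ i ∈ A, BddAbove (Set.range fun t => |f i t|) := by
  have hsum : BddAbove (Set.range fun t => ∑ i ∈ A, |f i t|) := by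
    refine ((Set.finite_univ.bddAbove_biUnion).2 fun σ _ => hf σ).mono ?_
    rintro _ ⟨t, rfl⟩
    exact Set.mem_biUnion (Set.mem_univ fun i => decide (0 ≤ f i t))
      ⟨t, sum_congr rfl fun i _ => boolSign_decide_mul _⟩
  intro i hi
  exact BddAbove.range_mono _
    (fun t => single_le_sum (f := fun i => |f i t|) (fun j _ => abs_nonneg _) hi) hsum

end Bounds

section Averaging

variable {T β : Type*} [Fintype β] {f : T → ℝ} {g : β → T → ℝ}

lemma card_mul_le_sum_ciSup_add (hg : ∀ t, ∑ b, g b t = 0)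
    (hbdd : ∀ b, BddAbove (Set.range fun t => f t + g b t)) (t : T) :
    Fintype.card β * f t ≤ ∑ b, ⨆ u, (f u + g b u) :=
  calc Fintype.card β * f t = ∑ b, (f t + g b t) := by
        rw [sum_add_distrib, hg, sum_const, nsmul_eq_mul, card_univ, add_zero]
    _ ≤ ∑ b, ⨆ u, (f u + g b u) := sum_le_sum fun b _ => le_ciSup (hbdd b) t

lemma card_mul_ciSup_le_sum_ciSup_add [Nonempty T] (hg : ∀ t, ∑ b, g b t = 0)
    (hbdd : ∀ b, BddAbove (Set.range fun t => f t + g b t)) :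
    Fintype.card β * ⨆ t, f t ≤ ∑ b, ⨆ u, (f u + g b u) := by
  rw [Real.mul_iSup_of_nonneg (Nat.cast_nonneg _)]
  exact ciSup_le (card_mul_le_sum_ciSup_add hg hbdd)

lemma bddAbove_of_forall_bddAbove_add [Nonempty β] (hg : ∀ t, ∑ b, g b t = 0)
    (hbdd : ∀ b, BddAbove (Set.range fun t => f t + g b t)) : BddAbove (Set.range f) := by
  refine ⟨(Fintype.card β : ℝ)⁻¹ * ∑ b, ⨆ u, (f u + g b u), ?_⟩
  rintro _ ⟨t, rfl⟩
  rw [le_inv_mul_iff₀ (by exact_mod_cast Fintype.card_pos)]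
  exact card_mul_le_sum_ciSup_add hg hbdd t

end Averaging

section Contraction

variable {T ι : Type*} [Nonempty T]

lemma ciSup_add_ciSup_sub_le {R F G : T → ℝ} (hFG : ∀ t s, |F t - F s| ≤ |G t - G s|)
    (hadd : BddAbove (Set.range fun t => R t + G t))
    (hsub : BddAbove (Set.range fun t => R t - G t)) :
    (⨆ t, (R t + F t)) + ⨆ t, (R t - F t) ≤ (⨆ t, (R t + G t)) + ⨆ t, (R t - G t) := by
  set Y := (⨆ t, (R t + G t)) + ⨆ t, (R t - G t)
  suffices h : ∀ t s, (R t + F t) + (R s - F s) ≤ Y by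
    have h' : ∀ s, ⨆ t, (R t + F t) ≤ Y - (R s - F s) := fun s =>
      ciSup_le fun t => by linarith [h t s]
    have h'' : ⨆ s, (R s - F s) ≤ Y - ⨆ t, (R t + F t) :=
      ciSup_le fun s => by linarith [h' s]
    linarith
  intro t s
  have hF := (le_abs_self (F t - F s)).trans (hFG t s)
  -- pair `t` with the `+G` supremum if `G` is larger at `t`, with the `-G` supremum otherwise
  rcases le_total (G s) (G t) with hG | hG
  · rw [abs_of_nonneg (sub_nonneg.2 hG)] at hF
    linarith [le_ciSup hadd t, le_ciSup hsub s]
  · rw [abs_of_nonpos (sub_nonpos.2 hG)] at hF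
    linarith [le_ciSup hadd s, le_ciSup hsub t]

variable [Fintype ι] [DecidableEq ι]

lemma sum_ciSup_add_boolSign_mul_le (k : ι) {F G : T → ℝ} {R : (ι → Bool) → T → ℝ}
    (hFG : ∀ t s, |F t - F s| ≤ |G t - G s|) (hG : BddAbove (Set.range fun t => |G t|))
    (hR : ∀ σ, BddAbove (Set.range (R σ))) (hRk : ∀ σ, R (flipAt k σ) = R σ) :
    ∑ σ, ⨆ t, (R σ t + boolSign (σ k) * F t) ≤ ∑ σ, ⨆ t, (R σ t + boolSign (σ k) * G t) := by
  set φ : (T → ℝ) → (ι → Bool) → ℝ := fun K σ => ⨆ t, (R σ t + boolSign (σ k) * K t)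
  have hflip : ∀ K σ, φ K (flipAt k σ) = ⨆ t, (R σ t - boolSign (σ k) * K t) := fun K σ => by
    simp only [φ, hRk, flipAt_apply_self, boolSign_not, neg_mul, ← sub_eq_add_neg]
  have hpair : ∀ σ, φ F σ + φ F (flipAt k σ) ≤ φ G σ + φ G (flipAt k σ) := fun σ => by
    rw [hflip, hflip]
    refine ciSup_add_ciSup_sub_le (fun t s => ?_) ?_ ?_
    · simpa only [← mul_sub, abs_mul, abs_boolSign, one_mul] using hFG t s
    · exact ((hR σ).range_add hG).range_mono _
        fun t => add_le_add_right (boolSign_mul_le_abs _ _) _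
    · refine ((hR σ).range_add hG).range_mono _ fun t => ?_
      have h := boolSign_mul_le_abs (!σ k) (G t)
      rw [boolSign_not, neg_mul] at h
      linarith
  have hsum := sum_le_sum fun σ (_ : σ ∈ univ) => hpair σ
  rw [sum_add_distrib, sum_add_distrib, sum_comp_flipAt k (φ F), sum_comp_flipAt k (φ G)] at hsum
  linarith

theorem sum_ciSup_add_signedSum_le (A : Finset ι) {F G : ι → T → ℝ}
    (hFG : ∀ i ∈ A, ∀ t s, |F i t - F i s| ≤ |G i t - G i s|)
    (hG : ∀ i ∈ A, BddAbove (Set.range fun t => |G i t|))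
    (H : (ι → Bool) → T → ℝ) (hH : ∀ σ, BddAbove (Set.range (H σ)))
    (hHA : ∀ σ τ : ι → Bool, (∀ i ∉ A, σ i = τ i) → H σ = H τ) :
    ∑ σ, ⨆ t, (H σ t + ∑ i ∈ A, boolSign (σ i) * F i t)
      ≤ ∑ σ, ⨆ t, (H σ t + ∑ i ∈ A, boolSign (σ i) * G i t) := by
  induction A using Finset.induction_on generalizing H with
  | empty => rfl
  | insert k A hk ih =>
    have hkA := mem_insert_self k A
    have hA : ∀ i ∈ A, i ∈ insert k A := fun i => mem_insert_of_mem
    have hF : ∀ i ∈ A, BddAbove (Set.range fun t => |F i t|) := fun i hi =>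
      bddAbove_abs_of_abs_sub_le zero_le_one (by simpa using hFG i (hA i hi)) (hG i (hA i hi))
    have hk_step := sum_ciSup_add_boolSign_mul_le k (hFG k hkA) (hG k hkA)
      (R := fun σ t => H σ t + ∑ i ∈ A, boolSign (σ i) * F i t)
      (fun σ => (hH σ).range_add (bddAbove_signedSum hF σ))
      (fun σ => by
        ext t
        rw [hHA (flipAt k σ) σ fun i hi =>
          flipAt_apply_of_ne (ne_of_mem_of_not_mem hkA hi).symm σ]
        congr 1
        exact sum_congr rfl fun i hi => by
          rw [flipAt_apply_of_ne (ne_of_mem_of_not_mem hi hk)])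
    have hA_step := ih (fun i hi => hFG i (hA i hi)) (fun i hi => hG i (hA i hi))
      (fun σ t => H σ t + boolSign (σ k) * G k t)
      (fun σ => (hH σ).range_add (((hG k hkA).range_mono _ fun t => boolSign_mul_le_abs _ _)))
      (fun σ τ hστ => by
        ext t
        rw [hHA σ τ fun i hi => hστ i fun h => hi (hA i h), hστ k hk])
    calc ∑ σ, ⨆ t, (H σ t + ∑ i ∈ insert k A, boolSign (σ i) * F i t)
        = ∑ σ, ⨆ t, ((H σ t + ∑ i ∈ A, boolSign (σ i) * F i t) + boolSign (σ k) * F k t) :=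
          sum_congr rfl fun σ _ => iSup_congr fun t => by rw [sum_insert hk]; ring
      _ ≤ ∑ σ, ⨆ t, ((H σ t + ∑ i ∈ A, boolSign (σ i) * F i t) + boolSign (σ k) * G k t) :=
          hk_step
      _ = ∑ σ, ⨆ t, ((H σ t + boolSign (σ k) * G k t) + ∑ i ∈ A, boolSign (σ i) * F i t) :=
          sum_congr rfl fun σ _ => iSup_congr fun t => by ring
      _ ≤ ∑ σ, ⨆ t, ((H σ t + boolSign (σ k) * G k t) + ∑ i ∈ A, boolSign (σ i) * G i t) :=
          hA_step
      _ = ∑ σ, ⨆ t, (H σ t + ∑ i ∈ insert k A, boolSign (σ i) * G i t) :=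
          sum_congr rfl fun σ _ => iSup_congr fun t => by rw [sum_insert hk]; ring

end Contraction

section RademacherSums

variable {T ι : Type*} [Fintype ι] [DecidableEq ι]

noncomputable def rademacherSum (A : Finset ι) (F : ι → T → ℝ) : ℝ :=
  ∑ σ : ι → Bool, ⨆ t, ∑ i ∈ A, boolSign (σ i) * F i t

noncomputable def rademacherSum₂ (A : Finset ι) (F G : ι → T → ℝ) : ℝ :=
  ∑ σ : (ι → Bool) × (ι → Bool), ⨆ t,
    ∑ i ∈ A, (boolSign (σ.1 i) * F i t + boolSign (σ.2 i) * G i t)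

lemma bddAbove_abs_of_bddAbove_twoSign {A : Finset ι} {F G : ι → T → ℝ}
    (hbdd : ∀ σ τ : ι → Bool, BddAbove (Set.range fun t =>
      ∑ i ∈ A, (boolSign (σ i) * F i t + boolSign (τ i) * G i t))) :
    (∀ i ∈ A, BddAbove (Set.range fun t => |F i t|)) ∧
      ∀ i ∈ A, BddAbove (Set.range fun t => |G i t|) := by
  constructor
  · refine bddAbove_abs_of_bddAbove_signedSum fun σ =>
      bddAbove_of_forall_bddAbove_add (sum_signedSum_eq_zero A G) fun τ => ?_
    simpa only [sum_add_distrib] using hbdd σ τ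
  · refine bddAbove_abs_of_bddAbove_signedSum fun τ =>
      bddAbove_of_forall_bddAbove_add (sum_signedSum_eq_zero A F) fun σ => ?_
    simpa only [sum_add_distrib, add_comm] using hbdd σ τ

variable [Nonempty T]

lemma rademacherSum_add_le {A : Finset ι} {F G : ι → T → ℝ}
    (hF : ∀ i ∈ A, BddAbove (Set.range fun t => |F i t|))
    (hG : ∀ i ∈ A, BddAbove (Set.range fun t => |G i t|)) :
    rademacherSum A (fun i t => F i t + G i t) ≤ rademacherSum A F + rademacherSum A G := by
  rw [rademacherSum, rademacherSum, rademacherSum, ← sum_add_distrib]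
  refine sum_le_sum fun σ _ => ciSup_le fun t => ?_
  simp only [mul_add, sum_add_distrib]
  exact add_le_add (le_ciSup (bddAbove_signedSum hF σ) t) (le_ciSup (bddAbove_signedSum hG σ) t)

theorem rademacherSum_le_mul {A : Finset ι} {F G : ι → T → ℝ} {ρ : ℝ}
    (hρ : 0 ≤ ρ) (hFG : ∀ i ∈ A, ∀ t s, |F i t - F i s| ≤ ρ * |G i t - G i s|)
    (hG : ∀ i ∈ A, BddAbove (Set.range fun t => |G i t|)) :
    rademacherSum A F ≤ ρ * rademacherSum A G := by
  have hρG : ∀ i ∈ A, BddAbove (Set.range fun t => |ρ * G i t|) := fun i hi => by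
    simpa only [abs_mul, abs_of_nonneg hρ] using
      (hG i hi).range_comp_left (monotone_mul_left_of_nonneg hρ)
  have h := sum_ciSup_add_signedSum_le A (F := F) (G := fun i t => ρ * G i t)
    (fun i hi t s => by rw [← mul_sub, abs_mul, abs_of_nonneg hρ]; exact hFG i hi t s) hρG
    (fun _ _ => 0) (fun _ => bddAbove_singleton.mono Set.range_const_subset) fun _ _ _ => rfl
  simp only [zero_add] at h
  rw [rademacherSum, rademacherSum, mul_sum]
  refine h.trans_eq ?_
  refine sum_congr rfl fun σ _ => ?_
  rw [Real.mul_iSup_of_nonneg hρ]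
  exact iSup_congr fun t => by rw [mul_sum]; exact sum_congr rfl fun i _ => by ring

theorem rademacherSum_add_rademacherSum_le {A : Finset ι} {F G : ι → T → ℝ}
    (hbdd : ∀ σ τ : ι → Bool, BddAbove (Set.range fun t =>
      ∑ i ∈ A, (boolSign (σ i) * F i t + boolSign (τ i) * G i t))) :
    rademacherSum A F + rademacherSum A G
      ≤ 2 * ((2 ^ Fintype.card ι)⁻¹ * rademacherSum₂ A F G) := by
  have hcard : (Fintype.card (ι → Bool) : ℝ) = 2 ^ Fintype.card ι := by
    simp
  have hF_le : ∀ σ : ι → Bool, (2 : ℝ) ^ Fintype.card ι * ⨆ t, ∑ i ∈ A, boolSign (σ i) * F i t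
      ≤ ∑ τ : ι → Bool, ⨆ t, ∑ i ∈ A, (boolSign (σ i) * F i t + boolSign (τ i) * G i t) :=
    fun σ => by
      rw [← hcard]
      simpa only [sum_add_distrib] using card_mul_ciSup_le_sum_ciSup_add
        (f := fun t => ∑ i ∈ A, boolSign (σ i) * F i t) (sum_signedSum_eq_zero A G)
        fun τ => by simpa only [sum_add_distrib] using hbdd σ τ
  have hG_le : ∀ τ : ι → Bool, (2 : ℝ) ^ Fintype.card ι * ⨆ t, ∑ i ∈ A, boolSign (τ i) * G i t
      ≤ ∑ σ : ι → Bool, ⨆ t, ∑ i ∈ A, (boolSign (σ i) * F i t + boolSign (τ i) * G i t) :=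
    fun τ => by
      rw [← hcard]
      simpa only [sum_add_distrib, add_comm] using card_mul_ciSup_le_sum_ciSup_add
        (f := fun t => ∑ i ∈ A, boolSign (τ i) * G i t) (sum_signedSum_eq_zero A F)
        fun σ => by simpa only [sum_add_distrib, add_comm] using hbdd σ τ
  rw [mul_left_comm, le_inv_mul_iff₀ (by positivity), mul_add, rademacherSum, rademacherSum,
    mul_sum, mul_sum, rademacherSum₂, Fintype.sum_prod_type, two_mul]
  exact add_le_add (sum_le_sum fun σ _ => hF_le σ)
    ((sum_le_sum fun τ _ => hG_le τ).trans_eq sum_comm)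

lemma abs_mul_comp_sub_mul_comp_le {ℓ : ℝ → ℝ} {ρ c x y : ℝ} (hc : 0 ≤ c)
    (h : |ℓ x - ℓ y| ≤ ρ * |x - y|) : |c * ℓ x - c * ℓ y| ≤ ρ * |c * x - c * y| := by
  rw [← mul_sub, ← mul_sub, abs_mul, abs_mul, abs_of_nonneg hc, mul_left_comm]
  exact mul_le_mul_of_nonneg_left h hc

theorem rademacherSum_univariateLoss_le {A : Finset ι} {vp vm : ι → T → ℝ} {ap am ρ : ℝ}
    (hap : 0 ≤ ap) (ham : 0 ≤ am) {ℓ : ℝ → ℝ} (hℓ : ∀ a b, |ℓ a - ℓ b| ≤ ρ * |a - b|)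
    (hbdd : ∀ σ τ : ι → Bool, BddAbove (Set.range fun t =>
      ∑ i ∈ A, (boolSign (σ i) * (ap * vp i t) + boolSign (τ i) * (am * vm i t)))) :
    rademacherSum A (fun i t => ap * ℓ (vp i t) + am * ℓ (-vm i t))
      ≤ 2 * ρ * ((2 ^ Fintype.card ι)⁻¹ *
        rademacherSum₂ A (fun i t => ap * vp i t) (fun i t => am * vm i t)) := by
  have hρ : 0 ≤ ρ := by simpa using (abs_nonneg _).trans (hℓ 1 0)
  obtain ⟨hp, hm⟩ := bddAbove_abs_of_bddAbove_twoSign hbdd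
  have hℓp : ∀ i ∈ A, ∀ t s,
      |ap * ℓ (vp i t) - ap * ℓ (vp i s)| ≤ ρ * |ap * vp i t - ap * vp i s| :=
    fun i _ t s => abs_mul_comp_sub_mul_comp_le hap (hℓ _ _)
  have hℓm : ∀ i ∈ A, ∀ t s,
      |am * ℓ (-vm i t) - am * ℓ (-vm i s)| ≤ ρ * |am * vm i t - am * vm i s| := fun i _ t s => by
    have h := abs_mul_comp_sub_mul_comp_le ham (hℓ (-vm i t) (-vm i s))
    rwa [mul_neg, mul_neg, neg_sub_neg, abs_sub_comm (am * vm i s)] at h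
  calc rademacherSum A (fun i t => ap * ℓ (vp i t) + am * ℓ (-vm i t))
      ≤ rademacherSum A (fun i t => ap * ℓ (vp i t))
          + rademacherSum A (fun i t => am * ℓ (-vm i t)) :=
        rademacherSum_add_le (fun i hi => bddAbove_abs_of_abs_sub_le hρ (hℓp i hi) (hp i hi))
          (fun i hi => bddAbove_abs_of_abs_sub_le hρ (hℓm i hi) (hm i hi))
    _ ≤ ρ * rademacherSum A (fun i t => ap * vp i t)
          + ρ * rademacherSum A (fun i t => am * vm i t) :=
        add_le_add (rademacherSum_le_mul hρ hℓp hp) (rademacherSum_le_mul hρ hℓm hm)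
    _ ≤ ρ * (2 * ((2 ^ Fintype.card ι)⁻¹ *
          rademacherSum₂ A (fun i t => ap * vp i t) (fun i t => am * vm i t))) := by
        rw [← mul_add]
        exact mul_le_mul_of_nonneg_left (rademacherSum_add_rademacherSum_le hbdd) hρ
    _ = _ := by ring

end RademacherSums

end RademacherContraction

open RademacherContraction

theorem fractional_rademacher_contraction_univariate_general
    (T : Type*) [Nonempty T] (m : ℕ) (J : ℕ)
    (I : Fin J → Finset (Fin m)) (w : Fin J → ℝ) (hw : ∀ j, 0 < w j)
    (vp vm : Fin m → T → ℝ) (ap am : ℝ) (hap : 0 ≤ ap) (ham : 0 ≤ am)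
    (ℓ : ℝ → ℝ) (ρ : ℝ) (hℓ : ∀ a b, |ℓ a - ℓ b| ≤ ρ * |a - b|)
    (hbdd₂ : ∀ (σp σm : Fin m → Bool) (j : Fin J), BddAbove
      (Set.range fun t => ∑ i ∈ I j,
        ((if σp i then (1 : ℝ) else -1) * (ap * vp i t)
          + (if σm i then (1 : ℝ) else -1) * (am * vm i t)))) :
    ((2 : ℝ) ^ m)⁻¹ * ∑ σ : Fin m → Bool, ∑ j : Fin J, w j *
        ⨆ t : T, ∑ i ∈ I j, (if σ i then (1 : ℝ) else -1) *
          (ap * ℓ (vp i t) + am * ℓ (-vm i t))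
      ≤ 2 * ρ * (((2 : ℝ) ^ (2 * m))⁻¹ *
          ∑ σ : (Fin m → Bool) × (Fin m → Bool), ∑ j : Fin J, w j *
            ⨆ t : T, ∑ i ∈ I j,
              ((if σ.1 i then (1 : ℝ) else -1) * (ap * vp i t)
                + (if σ.2 i then (1 : ℝ) else -1) * (am * vm i t))) := by
  have key : ∀ j, rademacherSum (I j) (fun i t => ap * ℓ (vp i t) + am * ℓ (-vm i t))
      ≤ 2 * ρ * ((2 ^ m)⁻¹ *
        rademacherSum₂ (I j) (fun i t => ap * vp i t) (fun i t => am * vm i t)) := fun j => by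
    simpa only [Fintype.card_fin] using
      rademacherSum_univariateLoss_le hap ham hℓ (hbdd₂ · · j)
  calc _
      = (2 ^ m)⁻¹ * ∑ j, w j * rademacherSum (I j)
          (fun i t => ap * ℓ (vp i t) + am * ℓ (-vm i t)) := by
        simp only [rademacherSum, mul_sum]
        rw [sum_comm]
        rfl
    _ ≤ (2 ^ m)⁻¹ * ∑ j, w j * (2 * ρ * ((2 ^ m)⁻¹ *
          rademacherSum₂ (I j) (fun i t => ap * vp i t) (fun i t => am * vm i t))) := by
        gcongr with j
        exacts [(hw j).le, key j]
    _ = 2 * ρ * ((2 ^ (2 * m))⁻¹ * ∑ j, w j *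
          rademacherSum₂ (I j) (fun i t => ap * vp i t) (fun i t => am * vm i t)) := by
        simp only [mul_sum]
        exact sum_congr rfl fun j _ => by ring
    _ = _ := by
        simp only [rademacherSum₂, mul_sum]
        rw [sum_comm]
        rfl

/-- **Contraction inequality for the (reweighted) univariate loss**
(Lemma `lem:app_contraction_univariate`), with Rademacher expectations realized
as finite averages over sign vectors. -/
theorem fractional_rademacher_contraction_univariate
    (T : Type*) [Nonempty T] (m : ℕ) (J : ℕ)
    (I : Fin J → Finset (Fin m)) (w : Fin J → ℝ) (hw : ∀ j, 0 < w j)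
    (vp vm : Fin m → T → ℝ) (ap am : ℝ) (hap : 0 ≤ ap) (ham : 0 ≤ am)
    (ℓ : ℝ → ℝ) (ρ : ℝ) (hℓ : ∀ a b, |ℓ a - ℓ b| ≤ ρ * |a - b|)
    (hbdd₁ : ∀ (σ : Fin m → Bool) (j : Fin J), BddAbove
      (Set.range fun t => ∑ i ∈ I j, (if σ i then (1 : ℝ) else -1) *
        (ap * ℓ (vp i t) + am * ℓ (-vm i t))))
    (hbdd₂ : ∀ (σp σm : Fin m → Bool) (j : Fin J), BddAbove
      (Set.range fun t => ∑ i ∈ I j,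
        ((if σp i then (1 : ℝ) else -1) * (ap * vp i t)
          + (if σm i then (1 : ℝ) else -1) * (am * vm i t)))) :
    ((2 : ℝ) ^ m)⁻¹ * ∑ σ : Fin m → Bool, ∑ j : Fin J, w j *
        ⨆ t : T, ∑ i ∈ I j, (if σ i then (1 : ℝ) else -1) *
          (ap * ℓ (vp i t) + am * ℓ (-vm i t))
      ≤ 2 * ρ * (((2 : ℝ) ^ (2 * m))⁻¹ *
          ∑ σ : (Fin m → Bool) × (Fin m → Bool), ∑ j : Fin J, w j *
            ⨆ t : T, ∑ i ∈ I j,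
              ((if σ.1 i then (1 : ℝ) else -1) * (ap * vp i t)
                + (if σ.2 i then (1 : ℝ) else -1) * (am * vm i t))) :=
  fractional_rademacher_contraction_univariate_general T m J I w hw vp vm ap am hap ham ℓ ρ hℓ hbdd₂
end

section
/- Fractional Rademacher complexity of the kernel-based hypothesis class for the pairwise loss: let ℍ be a real Hilbert space and Φ : 𝒳 → ℍ with ⟨Φ(x), Φ(x)⟩ ≤ r² for all x ∈ 𝒳. Let K ≥ 1 and n ≥ 2, and for each k ∈ [K] let n_k⁺, n_k⁻ ≥ 1 with n_k⁺ + n_k⁻ = n, τ_k = min(n_k⁺, n_k⁻)/n, m_k = n_k⁺ n_k⁻, and let (x⁺_{ki}, x⁻_{ki})_{i∈[m_k]} be points of 𝒳 × 𝒳. Let {(I_{kj}, ω_{kj})}_{j∈[J_k]} be a family with I_{kj} ⊆ [m_k] and ω_{kj} > 0 such that ∑_{j : i ∈ I_{kj}} ω_{kj} = 1 for every i ∈ [m_k] and ∑_{j∈[J_k]} ω_{kj} = max(n_k⁺, n_k⁻). Then (1/K) ∑_{k=1}^K 2^{−m_k} ∑_{σ∈{−1,1}^{m_k}} (1/m_k)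 ∑_{j∈[J_k]} ω_{kj} · sup_{w∈ℍ, ‖w‖≤B} ∑_{i∈I_{kj}} σ_i ⟨w, Φ(x⁺_{ki}) − Φ(x⁻_{ki})⟩ ≤ (2 B r / √n) · ( (1/K) ∑_{k=1}^K √(1/τ_k) ). -/
open scoped BigOperators RealInnerProductSpace

/-!
For a fixed label `k` and sign vector `σ`, the supremum of `v ↦ ⟪v, u⟫` over the ball of radius
`B` is at most `B ‖u‖`, with `u = ∑_{i ∈ I_j} σᵢ zᵢ` and `zᵢ = Φ(x⁺ᵢ) - Φ(x⁻ᵢ)`, `‖zᵢ‖ ≤ 2r`.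
Rademacher signs are orthonormal, so the mean of `‖u‖²` is `∑_{i ∈ I_j} ‖zᵢ‖² ≤ |I_j| (2r)²`, and
Cauchy–Schwarz bounds the mean of `‖u‖` by `2r √|I_j|`. Since every pair is covered with total
weight one, `∑_j ω_j |I_j| = m`, and Cauchy–Schwarz over the cover gives
`∑_j ω_j √|I_j| ≤ √(max(n⁺, n⁻) m)`. With `m = min(n⁺, n⁻) max(n⁺, n⁻)` the label-`k` term is at
most `2Br / √min(n⁺, n⁻) = 2Br / √n · √(1/τ_k)`.
-/

open Finset Real

section RademacherSigns

variable {ι : Type*} [Fintype ι] [DecidableEq ι]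

lemma sum_sign_mul_sign_self (i : ι) :
    ∑ σ : ι → Bool, (if σ i then (1 : ℝ) else -1) * (if σ i then 1 else -1) =
      2 ^ Fintype.card ι := by
  have hsq : ∀ σ : ι → Bool, (if σ i then (1 : ℝ) else -1) * (if σ i then 1 else -1) = 1 := by
    intro σ; cases σ i <;> norm_num
  simp [hsq]

lemma sum_sign_mul_sign_of_ne {i j : ι} (hij : i ≠ j) :
    ∑ σ : ι → Bool, (if σ i then (1 : ℝ) else -1) * (if σ j then 1 else -1) = 0 := by
  set f : (ι → Bool) → ℝ := fun σ => (if σ i then (1 : ℝ) else -1) * (if σ j then 1 else -1)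
  -- flipping the `i`-th sign is a bijection of the sign vectors that negates the summand
  have hflip : Function.Involutive fun σ : ι → Bool => Function.update σ i (!σ i) := by
    intro σ
    ext x
    rcases eq_or_ne x i with rfl | hx <;> simp [Function.update_of_ne, *]
  have hneg : ∀ σ, f (Function.update σ i (!σ i)) = -f σ := by
    intro σ
    simp only [f, Function.update_self, Function.update_of_ne hij.symm]
    cases σ i <;> cases σ j <;> norm_num
  have := Equiv.sum_comp hflip.toPerm f
  simp only [Function.Involutive.coe_toPerm, hneg, sum_neg_distrib] at this
  linarith

variable {H : Type*} [NormedAddCommGroup H] [InnerProductSpace ℝ H]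

lemma sum_norm_sq_signed_sum (s : Finset ι) (z : ι → H) :
    ∑ σ : ι → Bool, ‖∑ i ∈ s, (if σ i then (1 : ℝ) else -1) • z i‖ ^ 2 =
      2 ^ Fintype.card ι * ∑ i ∈ s, ‖z i‖ ^ 2 := by
  simp only [← real_inner_self_eq_norm_sq, sum_inner, inner_sum, real_inner_smul_left,
    real_inner_smul_right, ← mul_assoc]
  rw [Finset.sum_comm, mul_sum]
  refine sum_congr rfl fun i hi => ?_
  rw [Finset.sum_comm, sum_eq_single_of_mem i hi]
  · rw [← sum_mul, sum_sign_mul_sign_self]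
  · intro j _ hji
    rw [← sum_mul, sum_sign_mul_sign_of_ne hji.symm, zero_mul]

lemma sum_norm_signed_sum_le (s : Finset ι) {z : ι → H} {R : ℝ} (hR : 0 ≤ R)
    (hz : ∀ i, ‖z i‖ ≤ R) :
    ∑ σ : ι → Bool, ‖∑ i ∈ s, (if σ i then (1 : ℝ) else -1) • z i‖ ≤
      2 ^ Fintype.card ι * (R * √(#s : ℝ)) := by
  have hz2 : ∑ i ∈ s, ‖z i‖ ^ 2 ≤ #s * R ^ 2 := by
    simpa using sum_le_card_nsmul s _ _ fun i _ => pow_le_pow_left₀ (norm_nonneg _) (hz i) 2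
  calc ∑ σ : ι → Bool, ‖∑ i ∈ s, (if σ i then (1 : ℝ) else -1) • z i‖
      ≤ √(∑ _σ : ι → Bool, 1 ^ 2) *
          √(∑ σ : ι → Bool, ‖∑ i ∈ s, (if σ i then (1 : ℝ) else -1) • z i‖ ^ 2) := by
        simpa using sum_mul_le_sqrt_mul_sqrt univ (fun _ => (1 : ℝ))
          fun σ : ι → Bool => ‖∑ i ∈ s, (if σ i then (1 : ℝ) else -1) • z i‖
    _ ≤ √(2 ^ Fintype.card ι) * √(2 ^ Fintype.card ι * (#s * R ^ 2)) := by
        rw [sum_norm_sq_signed_sum]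
        simp only [one_pow, sum_const, card_univ, Fintype.card_fun, Fintype.card_bool,
          nsmul_eq_mul, mul_one, Nat.cast_pow, Nat.cast_ofNat]
        gcongr
    _ = 2 ^ Fintype.card ι * (R * √(#s : ℝ)) := by
        rw [sqrt_mul (by positivity), sqrt_mul (by positivity), sqrt_sq hR, ← mul_assoc,
          mul_self_sqrt (by positivity)]
        ring

lemma iSup_inner_le_mul_norm {B : ℝ} (hB : 0 ≤ B) (u : H) :
    ⨆ v : {v : H // ‖v‖ ≤ B}, ⟪(v : H), u⟫ ≤ B * ‖u‖ :=
  haveI : Nonempty {v : H // ‖v‖ ≤ B} := ⟨⟨0, by simpa using hB⟩⟩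
  ciSup_le fun v => (real_inner_le_norm _ _).trans (by gcongr; exact v.2)

end RademacherSigns

section FractionalCover

variable {ι κ : Type*} [Fintype ι] [DecidableEq ι] [Fintype κ] {I : κ → Finset ι} {w : κ → ℝ}

lemma sum_mul_card_eq_card_of_cover
    (hcover : ∀ i, ∑ j ∈ univ.filter (fun j => i ∈ I j), w j = 1) :
    ∑ j, w j * #(I j) = Fintype.card ι := by
  calc ∑ j, w j * #(I j) = ∑ j, ∑ _i ∈ I j, w j := by simp [mul_comm]
    _ = ∑ i, ∑ j ∈ univ.filter (fun j => i ∈ I j), w j := sum_comm' (by simp)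
    _ = Fintype.card ι := by simp [hcover]

lemma sum_mul_sqrt_card_le_of_cover (hw : ∀ j, 0 ≤ w j)
    (hcover : ∀ i, ∑ j ∈ univ.filter (fun j => i ∈ I j), w j = 1) :
    ∑ j, w j * √(#(I j) : ℝ) ≤ √(∑ j, w j) * √(Fintype.card ι : ℝ) := by
  calc ∑ j, w j * √(#(I j) : ℝ) = ∑ j, √(w j) * √(w j * #(I j)) := by
        refine sum_congr rfl fun j _ => ?_
        rw [sqrt_mul (hw j), ← mul_assoc, mul_self_sqrt (hw j)]
    _ ≤ √(∑ j, w j) * √(∑ j, w j * #(I j)) :=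
        sum_sqrt_mul_sqrt_le _ hw fun j => mul_nonneg (hw j) (Nat.cast_nonneg _)
    _ = √(∑ j, w j) * √(Fintype.card ι : ℝ) := by rw [sum_mul_card_eq_card_of_cover hcover]

variable {H : Type*} [NormedAddCommGroup H] [InnerProductSpace ℝ H]

theorem sum_signs_weighted_iSup_inner_le {z : ι → H} {B R : ℝ} (hB : 0 ≤ B) (hR : 0 ≤ R)
    (hz : ∀ i, ‖z i‖ ≤ R) (hw : ∀ j, 0 ≤ w j)
    (hcover : ∀ i, ∑ j ∈ univ.filter (fun j => i ∈ I j), w j = 1) :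
    ∑ σ : ι → Bool, ∑ j, w j * ⨆ v : {v : H // ‖v‖ ≤ B},
        ∑ i ∈ I j, (if σ i then (1 : ℝ) else -1) * ⟪(v : H), z i⟫ ≤
      2 ^ Fintype.card ι * (B * R * (√(∑ j, w j) * √(Fintype.card ι : ℝ))) := by
  have hsup : ∀ σ : ι → Bool, ∀ j, (⨆ v : {v : H // ‖v‖ ≤ B},
      ∑ i ∈ I j, (if σ i then (1 : ℝ) else -1) * ⟪(v : H), z i⟫) ≤
        B * ‖∑ i ∈ I j, (if σ i then (1 : ℝ) else -1) • z i‖ := by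
    intro σ j
    simpa only [inner_sum, real_inner_smul_right] using
      iSup_inner_le_mul_norm hB (∑ i ∈ I j, (if σ i then (1 : ℝ) else -1) • z i)
  calc ∑ σ : ι → Bool, ∑ j, w j * ⨆ v : {v : H // ‖v‖ ≤ B},
        ∑ i ∈ I j, (if σ i then (1 : ℝ) else -1) * ⟪(v : H), z i⟫
      ≤ ∑ σ : ι → Bool, ∑ j, w j * (B * ‖∑ i ∈ I j, (if σ i then (1 : ℝ) else -1) • z i‖) := by
        gcongr with σ _ j; exacts [hw j, hsup σ j]
    _ = ∑ j, w j * B * ∑ σ : ι → Bool, ‖∑ i ∈ I j, (if σ i then (1 : ℝ) else -1) • z i‖ := by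
        rw [sum_comm]; simp only [mul_sum, mul_assoc]
    _ ≤ ∑ j, w j * B * (2 ^ Fintype.card ι * (R * √(#(I j) : ℝ))) := by
        gcongr with j; exacts [mul_nonneg (hw j) hB, sum_norm_signed_sum_le _ hR hz]
    _ = 2 ^ Fintype.card ι * (B * R * ∑ j, w j * √(#(I j) : ℝ)) := by
        simp only [mul_sum]; exact sum_congr rfl fun j _ => by ring
    _ ≤ 2 ^ Fintype.card ι * (B * R * (√(∑ j, w j) * √(Fintype.card ι : ℝ))) := by
        gcongr; exact sum_mul_sqrt_card_le_of_cover hw hcover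

end FractionalCover

lemma inv_mul_mul_sqrt_max_mul_sqrt_mul {a b : ℝ} (ha : 0 < a) (hb : 0 < b) :
    (a * b)⁻¹ * (√(max a b) * √(a * b)) = (√(min a b))⁻¹ := by
  rw [← min_mul_max a b, sqrt_mul (lt_min ha hb).le]
  field_simp
  rw [sq_sqrt (lt_max_of_lt_left ha).le, sq_sqrt (lt_min ha hb).le, mul_comm]

lemma sqrt_one_div_div {c n : ℝ} (hn : 0 < n) : √(1 / (c / n)) = √n * (√c)⁻¹ := by
  rw [one_div_div, sqrt_div hn.le, div_eq_mul_inv]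

theorem fracRad_kernel_pairwise_general
    {H X : Type*} [NormedAddCommGroup H] [InnerProductSpace ℝ H]
    (Φ : X → H) (r : ℝ) (hr : 0 < r) (hΦ : ∀ x, ⟪Φ x, Φ x⟫ ≤ r ^ 2)
    (K n : ℕ) (hn : 2 ≤ n)
    (np nm : Fin K → ℕ) (hnp : ∀ k, 1 ≤ np k) (hnm : ∀ k, 1 ≤ nm k)
    (xs : (k : Fin K) → Fin (np k * nm k) → X × X)
    (J : Fin K → ℕ)
    (I : (k : Fin K) → Fin (J k) → Finset (Fin (np k * nm k)))
    (w : (k : Fin K) → Fin (J k) → ℝ) (hw : ∀ k j, 0 < w k j)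
    (hcover : ∀ k (i : Fin (np k * nm k)),
      ∑ j ∈ Finset.univ.filter (fun j => i ∈ I k j), w k j = 1)
    (hchrom : ∀ k, ∑ j, w k j = (max (np k) (nm k) : ℝ))
    (B : ℝ) (hB : 0 ≤ B) :
    (K : ℝ)⁻¹ * ∑ k : Fin K,
        ((2 : ℝ) ^ (np k * nm k))⁻¹ * ∑ σ : Fin (np k * nm k) → Bool,
          ((np k * nm k : ℕ) : ℝ)⁻¹ * ∑ j : Fin (J k), w k j *
            ⨆ v : {v : H // ‖v‖ ≤ B}, ∑ i ∈ I k j,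
              (if σ i then (1 : ℝ) else -1) * ⟪(v : H), Φ (xs k i).1 - Φ (xs k i).2⟫
      ≤ 2 * B * r / Real.sqrt n *
          ((K : ℝ)⁻¹ * ∑ k : Fin K, Real.sqrt (1 / ((min (np k) (nm k) : ℝ) / n))) := by
  have hΦr : ∀ x, ‖Φ x‖ ≤ r := fun x =>
    abs_le_of_sq_le_sq' (by rw [← real_inner_self_eq_norm_sq]; exact hΦ x) hr.le |>.2
  have hdiff : ∀ x y, ‖Φ x - Φ y‖ ≤ 2 * r := fun x y =>
    (norm_sub_le _ _).trans (by linarith [hΦr x, hΦr y])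
  have hnpos : (0 : ℝ) < n := by exact_mod_cast (by omega : 0 < n)
  rw [mul_left_comm, mul_sum _ _ (2 * B * r / √(n : ℝ))]
  refine mul_le_mul_of_nonneg_left (sum_le_sum fun k _ => ?_) (by positivity)
  have hp : (0 : ℝ) < np k := by exact_mod_cast hnp k
  have hm : (0 : ℝ) < nm k := by exact_mod_cast hnm k
  have key := sum_signs_weighted_iSup_inner_le (z := fun i => Φ (xs k i).1 - Φ (xs k i).2) hB
    (by positivity) (fun i => hdiff _ _) (fun j => (hw k j).le) (hcover k)
  rw [Fintype.card_fin, hchrom k, ← inv_mul_le_iff₀ (by positivity)] at key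
  calc ((2 : ℝ) ^ (np k * nm k))⁻¹ * ∑ σ : Fin (np k * nm k) → Bool,
          ((np k * nm k : ℕ) : ℝ)⁻¹ * ∑ j : Fin (J k), w k j *
            ⨆ v : {v : H // ‖v‖ ≤ B}, ∑ i ∈ I k j,
              (if σ i then (1 : ℝ) else -1) * ⟪(v : H), Φ (xs k i).1 - Φ (xs k i).2⟫
      ≤ ((np k * nm k : ℕ) : ℝ)⁻¹ * (B * (2 * r) *
          (√(max (np k : ℝ) (nm k)) * √((np k * nm k : ℕ) : ℝ))) := by
        rw [← mul_sum, mul_left_comm]; gcongr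
    _ = 2 * B * r / √n * √(1 / ((min (np k) (nm k) : ℝ) / n)) := by
        rw [Nat.cast_mul, mul_left_comm, inv_mul_mul_sqrt_max_mul_sqrt_mul hp hm,
          sqrt_one_div_div hnpos]
        field_simp

/-- **Fractional Rademacher complexity of the kernel-based hypothesis class for
the pairwise loss** (Lemma `lem:app_frac_rade_kernel_hypothesis_pairwise`),
with the Rademacher expectation realized as a finite average over sign vectors. -/
theorem fracRad_kernel_pairwise
    {H X : Type*} [NormedAddCommGroup H] [InnerProductSpace ℝ H]
    (Φ : X → H) (r : ℝ) (hr : 0 < r) (hΦ : ∀ x, ⟪Φ x, Φ x⟫ ≤ r ^ 2)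
    (K n : ℕ) (hK : 1 ≤ K) (hn : 2 ≤ n)
    (np nm : Fin K → ℕ) (hnp : ∀ k, 1 ≤ np k) (hnm : ∀ k, 1 ≤ nm k)
    (hsum : ∀ k, np k + nm k = n)
    (xs : (k : Fin K) → Fin (np k * nm k) → X × X)
    (J : Fin K → ℕ)
    (I : (k : Fin K) → Fin (J k) → Finset (Fin (np k * nm k)))
    (w : (k : Fin K) → Fin (J k) → ℝ) (hw : ∀ k j, 0 < w k j)
    (hcover : ∀ k (i : Fin (np k * nm k)),
      ∑ j ∈ Finset.univ.filter (fun j => i ∈ I k j), w k j = 1)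
    (hchrom : ∀ k, ∑ j, w k j = (max (np k) (nm k) : ℝ))
    (B : ℝ) (hB : 0 ≤ B) :
    (K : ℝ)⁻¹ * ∑ k : Fin K,
        ((2 : ℝ) ^ (np k * nm k))⁻¹ * ∑ σ : Fin (np k * nm k) → Bool,
          ((np k * nm k : ℕ) : ℝ)⁻¹ * ∑ j : Fin (J k), w k j *
            ⨆ v : {v : H // ‖v‖ ≤ B}, ∑ i ∈ I k j,
              (if σ i then (1 : ℝ) else -1) * ⟪(v : H), Φ (xs k i).1 - Φ (xs k i).2⟫
      ≤ 2 * B * r / Real.sqrt n *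
          ((K : ℝ)⁻¹ * ∑ k : Fin K, Real.sqrt (1 / ((min (np k) (nm k) : ℝ) / n))) :=
  fracRad_kernel_pairwise_general Φ r hr hΦ K n hn np nm hnp hnm xs J I w hw hcover hchrom B hB
end
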